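/- Let m ≥ 2 and let A be a real m×m matrix with a_{ij} ≥ 0 for all i ≠ j, zero row sums, and irreducible (for every pair i ≠ j there is a chain i = i₀, …, i_k = j with a_{i_l i_{l+1}} ≠ 0). Let ξ ∈ ℝᵐ with ξ_i > 0 for all i and ξᵀA = 0, set Ξ = diag(ξ₁,…,ξ_m), let ε > 0, and let Ã be the pinned matrix (ã_{11} = a_{11} − ε, ã_{ij} = a_{ij} otherwise). Then the symmetric part {ΞÃ}^s = (1/2)(ΞÃ + ÃᵀΞ) is negative definite. -/

import Mathlib

/-!
Put `B = ΞA`. It has zero row sums (as `A` does) and zero column sums (as `ξᵀA = 0`), so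
`vᵀBv = -½ ∑ b_ij (v_i - v_j)² ≤ 0`, the off-diagonal `b_ij` being nonnegative. The quadratic form
of `{ΞÃ}ˢ` is `vᵀBv - ε ξ₁ v₁²`. If `v₁ ≠ 0` the pinning term makes it negative. If `v₁ = 0`, then
`v` vanishes at `1` but not everywhere, so along a chain of nonzero entries of `A` from `1` to a
point where `v ≠ 0` there is an edge across which `v` jumps, and the Dirichlet sum is positive.
-/

open Matrix BigOperators

theorem Relation.TransGen.exists_rel_apply_ne {α β : Type*} {r : α → α → Prop} {f : α → β}
    {x y : α} (hxy : TransGen r x y) (hf : f x ≠ f y) : ∃ p q, r p q ∧ f p ≠ f q := by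
  by_contra! h
  exact hf <| transGen_eq_self (α := β) (r := Eq) ▸ hxy.lift f h

namespace Matrix

variable {n R : Type*}

section Algebra

variable [Fintype n]

theorem dotProduct_half_smul_add_transpose_mulVec [Field R] [CharZero R] (M : Matrix n n R)
    (v : n → R) : v ⬝ᵥ ((1 / 2 : R) • (M + Mᵀ)) *ᵥ v = v ⬝ᵥ M *ᵥ v := by
  rw [smul_mulVec, dotProduct_smul, add_mulVec, dotProduct_add, mulVec_transpose,
    dotProduct_comm v (v ᵥ* M), ← dotProduct_mulVec, smul_eq_mul]
  ring

theorem dotProduct_diagonal_mul_sub_single_mulVec [DecidableEq n] [CommRing R] (ξ v : n → R)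
    (M : Matrix n n R) (i : n) (c : R) :
    v ⬝ᵥ (diagonal ξ * (M - single i i c)) *ᵥ v
      = v ⬝ᵥ (diagonal ξ * M) *ᵥ v - ξ i * c * v i ^ 2 := by
  simp only [mul_sub, sub_mulVec, ← mulVec_mulVec, single_mulVec_eq, mulVec_smul, mulVec_single,
    MulOpposite.op_one, col_diagonal, one_smul, dotProduct_sub, dotProduct_smul,
    dotProduct_single, smul_eq_mul, sub_right_inj]
  ring

theorem two_mul_dotProduct_mulVec_of_sum_eq_zero [CommRing R] (B : Matrix n n R)
    (hrow : ∀ i, ∑ j, B i j = 0) (hcol : ∀ j, ∑ i, B i j = 0) (v : n → R) :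
    2 * (v ⬝ᵥ B *ᵥ v) = -∑ i, ∑ j, B i j * (v i - v j) ^ 2 := by
  have hrow' : ∑ i, ∑ j, B i j * v i ^ 2 = 0 := by
    simp [← Finset.sum_mul, hrow]
  have hcol' : ∑ i, ∑ j, B i j * v j ^ 2 = 0 := by
    rw [Finset.sum_comm]
    simp [← Finset.sum_mul, hcol]
  have hexpand : ∀ i j, B i j * (v i - v j) ^ 2
      = B i j * v i ^ 2 + B i j * v j ^ 2 - 2 * (v i * (B i j * v j)) := fun i j => by ring
  simp only [hexpand, Finset.sum_add_distrib, Finset.sum_sub_distrib, ← Finset.mul_sum, hrow',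
    hcol', dotProduct, mulVec]
  ring

end Algebra

section Order

variable [Ring R] [LinearOrder R] [IsStrictOrderedRing R] {B : Matrix n n R}

theorem mul_sub_sq_nonneg (hoff : ∀ i j, i ≠ j → 0 ≤ B i j) (v : n → R) (i j : n) :
    0 ≤ B i j * (v i - v j) ^ 2 := by
  rcases eq_or_ne i j with rfl | hij
  · simp
  · exact mul_nonneg (hoff i j hij) (sq_nonneg _)

variable [Fintype n]

theorem sum_mul_sub_sq_nonneg (hoff : ∀ i j, i ≠ j → 0 ≤ B i j) (v : n → R) :
    0 ≤ ∑ i, ∑ j, B i j * (v i - v j) ^ 2 :=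
  Finset.sum_nonneg fun i _ => Finset.sum_nonneg fun j _ => mul_sub_sq_nonneg hoff v i j

theorem sum_mul_sub_sq_pos (hoff : ∀ i j, i ≠ j → 0 ≤ B i j) {v : n → R} {p q : n}
    (hB : B p q ≠ 0) (hv : v p ≠ v q) : 0 < ∑ i, ∑ j, B i j * (v i - v j) ^ 2 := by
  have hpq : p ≠ q := fun h => hv (congrArg v h)
  have hterm : 0 < B p q * (v p - v q) ^ 2 :=
    mul_pos ((hoff p q hpq).lt_of_ne' hB) (sq_pos_of_ne_zero (sub_ne_zero.2 hv))
  exact Finset.sum_pos' (fun i _ => Finset.sum_nonneg fun j _ => mul_sub_sq_nonneg hoff v i j)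
    ⟨p, Finset.mem_univ p, Finset.sum_pos' (fun j _ => mul_sub_sq_nonneg hoff v p j)
      ⟨q, Finset.mem_univ q, hterm⟩⟩

end Order

end Matrix

/-- For an irreducible zero-row-sum matrix `A` with nonnegative off-diagonal
entries and positive left null vector `ξ`, the symmetric part of `ΞÃ` (where `Ã`
is the pinned matrix) is negative definite. -/
theorem stmt_12 (m : ℕ) (hm : 2 ≤ m) (A : Matrix (Fin m) (Fin m) ℝ)
    (hoff : ∀ i j : Fin m, i ≠ j → 0 ≤ A i j)
    (hrow : ∀ i : Fin m, ∑ j, A i j = 0)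
    (hirr : ∀ i j : Fin m, i ≠ j → Relation.TransGen (fun p q => A p q ≠ 0) i j)
    (ξ : Fin m → ℝ) (hξ : ∀ i, 0 < ξ i)
    (hleft : ξ ᵥ* A = 0)
    (ε : ℝ) (hε : 0 < ε)
    (Atil : Matrix (Fin m) (Fin m) ℝ)
    (hAtil : ∀ i j : Fin m, Atil i j =
      if i = (⟨0, by omega⟩ : Fin m) ∧ j = (⟨0, by omega⟩ : Fin m) then A i j - ε else A i j)
    (v : Fin m → ℝ) (hv : v ≠ 0) :
    v ⬝ᵥ ((1 / 2 : ℝ) • (Matrix.diagonal ξ * Atil + Atilᵀ * Matrix.diagonal ξ)) *ᵥ v < 0 := by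
  set z : Fin m := ⟨0, by omega⟩
  have hpin : Atil = A - single z z ε := by
    ext i j
    rw [hAtil, Matrix.sub_apply, single_apply]
    simp only [eq_comm (a := z)]
    split_ifs <;> ring
  set B := diagonal ξ * A
  have hB : ∀ i j, B i j = ξ i * A i j := diagonal_mul ξ A
  have hBrow : ∀ i, ∑ j, B i j = 0 := fun i => by simp [hB, ← Finset.mul_sum, hrow]
  have hBcol : ∀ j, ∑ i, B i j = 0 := fun j => by
    simpa [hB, vecMul, dotProduct] using congrFun hleft j
  have hBoff : ∀ i j, i ≠ j → 0 ≤ B i j := fun i j hij =>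
    hB i j ▸ mul_nonneg (hξ i).le (hoff i j hij)
  have hform := two_mul_dotProduct_mulVec_of_sum_eq_zero B hBrow hBcol v
  rw [show Atilᵀ * diagonal ξ = (diagonal ξ * Atil)ᵀ by simp [transpose_mul],
    dotProduct_half_smul_add_transpose_mulVec, hpin, dotProduct_diagonal_mul_sub_single_mulVec]
  rcases eq_or_ne (v z) 0 with hz | hz
  · obtain ⟨k, hk⟩ : ∃ k, v k ≠ 0 := Function.ne_iff.mp hv
    have hzk : z ≠ k := by rintro rfl; exact hk hz
    obtain ⟨p, q, hApq, hvpq⟩ := (hirr z k hzk).exists_rel_apply_ne (hz ▸ hk.symm)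
    have hS := sum_mul_sub_sq_pos hBoff (hB p q ▸ mul_ne_zero (hξ p).ne' hApq) hvpq
    rw [hz]
    linarith
  · have hpinned := mul_pos (mul_pos (hξ z) hε) (sq_pos_of_ne_zero hz)
    linarith [sum_mul_sub_sq_nonneg hBoff v]
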